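/- Let H' ⊂ H be symplectic Z-modules of ranks 2g' and 2g respectively, with g' < g, where H' is embedded symplectically (i.e., as the span of part of a symplectic basis of H). Then the composite map ∧³H' → ∧³H → (∧³H)/i(H) is injective, where i : H → ∧³H is the standard embedding h ↦ h∧ω. -/

import Mathlib

/-!
Coordinate functionals `φ₁, φ₂, φ₃` give the alternating 3-form `det (φ_c (v_r))`, which extends to
a linear functional on the exterior algebra. For `φ = (e_k^*, e_{a_m}^*, e_{b_m}^*)` with
`k ∉ {a_m, b_m}`, this functional sends `h ∧ ω` to `e_k^*(h)`, and it kills `∧³H'` as soon as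
`e_k^*` or `e_{a_m}^*` vanishes on `H'`. When `g' > 0` such an `m` exists for every `k`, because some
index `≥ g'` differs from that of `k`; so `h ∧ ω ∈ ∧³H'` forces `h = 0`. When `g' = 0`, `∧³H' = 0`.
-/

open ExteriorAlgebra

namespace ExteriorAlgebra

variable {R M : Type*} [CommRing R] [AddCommGroup M] [Module R M]

noncomputable def dualDetForm {n : ℕ} (φ : Fin n → Module.Dual R M) : M [⋀^Fin n]→ₗ[R] R :=
  Matrix.detRowAlternating.compLinearMap (LinearMap.pi φ)

theorem dualDetForm_apply {n : ℕ} (φ : Fin n → Module.Dual R M) (v : Fin n → M) :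
    dualDetForm φ v = (Matrix.of fun r c => φ c (v r)).det :=
  rfl

theorem dualDetForm_eq_zero_of_forall_mem {n : ℕ} (φ : Fin n → Module.Dual R M)
    (P : Submodule R M) (c : Fin n) (hc : ∀ u ∈ P, φ c u = 0) {v : Fin n → M}
    (hv : ∀ r, v r ∈ P) : dualDetForm φ v = 0 :=
  Matrix.det_eq_zero_of_column_eq_zero c fun r => hc _ (hv r)

theorem ι_mul_ι_mul_ι (u v w : M) : ι R u * ι R v * ι R w = ιMulti R 3 ![u, v, w] := by
  simp [ιMulti_apply, mul_assoc]

theorem liftAlternating_single_ιMulti {n : ℕ} (f : M [⋀^Fin n]→ₗ[R] R) (v : Fin n → M) :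
    liftAlternating (Pi.single n f) (ιMulti R n v) = f v := by
  rw [liftAlternating_apply_ιMulti, Pi.single_eq_same]

theorem liftAlternating_single_eq_zero_of_mem_span (f : M [⋀^Fin 3]→ₗ[R] R)
    (P : Submodule R M) (hf : ∀ u ∈ P, ∀ v ∈ P, ∀ w ∈ P, f ![u, v, w] = 0)
    {x : ExteriorAlgebra R M}
    (hx : x ∈ Submodule.span R {z | ∃ u v w : M, u ∈ P ∧ v ∈ P ∧ w ∈ P ∧ z = ι R u * ι R v * ι R w}) :
    liftAlternating (Pi.single 3 f) x = 0 := by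
  refine (Submodule.span_le (p := LinearMap.ker _)).2 ?_ hx
  rintro _ ⟨u, v, w, hu, hv, hw, rfl⟩
  rw [SetLike.mem_coe, LinearMap.mem_ker, ι_mul_ι_mul_ι, liftAlternating_single_ιMulti]
  exact hf u hu v hv w hw

end ExteriorAlgebra

namespace Module.Basis

variable {R M I J : Type*} [CommRing R] [AddCommGroup M] [Module R M]

theorem coord_eq_zero_of_mem_span_range (e : Basis I R M) (f : J → I) {i : I}
    (hi : i ∉ Set.range f) {u : M} (hu : u ∈ Submodule.span R (Set.range (e ∘ f))) :
    e.coord i u = 0 := by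
  rw [Set.range_comp, mem_span_image] at hu
  exact Finsupp.notMem_support_iff.1 fun h => hi (hu h)

variable [Fintype I] [DecidableEq I]

theorem liftAlternating_dualDetForm_ι_mul_symplectic (e : Basis (I ⊕ I) R M) {k : I ⊕ I} {m : I}
    (hkl : k ≠ Sum.inl m) (hkr : k ≠ Sum.inr m) (h : M) :
    liftAlternating (Pi.single 3 (dualDetForm ![e.coord k, e.coord (.inl m), e.coord (.inr m)]))
      (ι R h * ∑ i, ι R (e (.inl i)) * ι R (e (.inr i))) = e.coord k h := by
  rw [Finset.mul_sum, map_sum, Finset.sum_eq_single m]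
  · rw [← mul_assoc, ι_mul_ι_mul_ι, liftAlternating_single_ιMulti, dualDetForm_apply,
      Matrix.det_fin_three]
    simp [hkl.symm, hkr.symm]
  · intro j _ hj
    rw [← mul_assoc, ι_mul_ι_mul_ι, liftAlternating_single_ιMulti, dualDetForm_apply,
      Matrix.det_fin_three]
    simp [Finsupp.single_apply, hj]
  · simp

theorem coord_eq_zero_of_ι_mul_symplectic_mem_span (e : Basis (I ⊕ I) R M) (P : Submodule R M)
    {h : M} (hh : ι R h * ∑ i, ι R (e (.inl i)) * ι R (e (.inr i)) ∈ Submodule.span R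
      {z | ∃ u v w : M, u ∈ P ∧ v ∈ P ∧ w ∈ P ∧ z = ι R u * ι R v * ι R w})
    {k : I ⊕ I} {m : I} (hkl : k ≠ Sum.inl m) (hkr : k ≠ Sum.inr m)
    (hP : (∀ u ∈ P, e.coord k u = 0) ∨ ∀ u ∈ P, e.coord (.inl m) u = 0) :
    e.coord k h = 0 := by
  rw [← e.liftAlternating_dualDetForm_ι_mul_symplectic hkl hkr h]
  refine liftAlternating_single_eq_zero_of_mem_span _ P (fun u hu v hv w hw => ?_) hh
  obtain ⟨c, hc⟩ : ∃ c, ∀ u ∈ P, ![e.coord k, e.coord (.inl m), e.coord (.inr m)] c u = 0 :=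
    hP.elim (⟨0, ·⟩) (⟨1, ·⟩)
  exact dualDetForm_eq_zero_of_forall_mem _ P c hc fun r => by fin_cases r <;> assumption

end Module.Basis

theorem Fin.notMem_range_sumMap_castLE {n m : ℕ} (hnm : n ≤ m) {j : Fin m} (hj : n ≤ j)
    {k : Fin m ⊕ Fin m} (hk : k = .inl j ∨ k = .inr j) :
    k ∉ Set.range (Sum.map (Fin.castLE hnm) (Fin.castLE hnm)) := by
  rintro ⟨p | p, rfl⟩ <;> rcases hk with hk | hk <;> simp [Fin.ext_iff] at hk <;> omega

/-- If `H' ⊂ H` is the span of the first `2g'` vectors of a symplectic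
basis of a rank-`2g` symplectic `ℤ`-module `H` with `g' < g`, then the composite
`∧³H' → ∧³H → (∧³H)/i(H)` is injective, where `i : h ↦ h ∧ ω` is the standard
embedding. -/
theorem wedge_cube_mod_H_injective (g g' : ℕ) (hg : g' < g)
    (H : Type) [AddCommGroup H] [Module ℤ H]
    (e : Module.Basis (Fin g ⊕ Fin g) ℤ H)
    (ω : ExteriorAlgebra ℤ H)
    (hω : ω = ∑ i : Fin g, ι ℤ (e (Sum.inl i)) * ι ℤ (e (Sum.inr i)))
    (iH : H →ₗ[ℤ] ExteriorAlgebra ℤ H)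
    (hiH : ∀ h : H, iH h = ι ℤ h * ω)
    (H' : Submodule ℤ H)
    (hH' : H' = Submodule.span ℤ
      (Set.range fun p : Fin g' ⊕ Fin g' =>
        e (Sum.map (Fin.castLE hg.le) (Fin.castLE hg.le) p)))
    (W3 : Submodule ℤ (ExteriorAlgebra ℤ H))
    (hW3 : W3 = Submodule.span ℤ {z : ExteriorAlgebra ℤ H |
        ∃ u v w : H, u ∈ H' ∧ v ∈ H' ∧ w ∈ H' ∧ z = ι ℤ u * ι ℤ v * ι ℤ w}) :
    Function.Injective ((LinearMap.range iH).mkQ ∘ₗ W3.subtype) := by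
  subst hω hW3
  rw [← LinearMap.ker_eq_bot, LinearMap.ker_eq_bot']
  rintro ⟨x, hx⟩ hx0
  obtain ⟨h, rfl⟩ : ∃ h, ι ℤ h * _ = x := by simpa [hiH] using hx0
  rw [Submodule.mk_eq_zero]
  rcases Nat.eq_zero_or_pos g' with rfl | hg'
  · rw [Submodule.span_eq_bot.2, Submodule.mem_bot] at hx
    · exact hx
    rintro _ ⟨u, v, w, hu, -, -, rfl⟩
    simp only [hH', Set.range_eq_empty, Submodule.span_empty, Submodule.mem_bot] at hu
    simp [hu]
  suffices ∀ k, e.coord k h = 0 by simp [e.forall_coord_eq_zero_iff.mp this]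
  intro k
  obtain ⟨j, hk⟩ : ∃ j, k = .inl j ∨ k = .inr j := by rcases k with j | j <;> simp
  obtain ⟨m, hmj, hjm⟩ : ∃ m : Fin g, m ≠ j ∧ (g' ≤ j ∨ g' ≤ m) := by
    by_cases hj : (j : ℕ) = g'
    · exact ⟨⟨0, by omega⟩, by simp [Fin.ext_iff]; omega, .inl hj.ge⟩
    · exact ⟨⟨g', hg⟩, by simp [Fin.ext_iff]; omega, .inr le_rfl⟩
  have hkill {i : Fin g ⊕ Fin g} {l : Fin g} (hl : g' ≤ l) (hi : i = .inl l ∨ i = .inr l) :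
      ∀ u ∈ H', e.coord i u = 0 := fun u hu =>
    e.coord_eq_zero_of_mem_span_range _ (Fin.notMem_range_sumMap_castLE hg.le hl hi) (hH' ▸ hu)
  refine e.coord_eq_zero_of_ι_mul_symplectic_mem_span H' hx (m := m) ?_ ?_
    (hjm.imp (hkill · hk) (hkill · (.inl rfl))) <;>
    rcases hk with rfl | rfl <;> simp [hmj.symm]
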